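/- The linear operator R on M₂(F) defined by R(e₁₁) = 0, R(e₁₂) = e₁₁, R(e₂₁) = e₁₁, R(e₂₂) = 0 is a Rota–Baxter operator of weight 0 on the Jordan algebra M₂(F)^(+), but it is not a Rota–Baxter operator of weight 0 on the associative algebra M₂(F). -/

import Mathlib

/-- The matrix unit `eᵢⱼ` in `M₂(F)`. -/
def E (F : Type*) [Field F] (i j : Fin 2) : Matrix (Fin 2) (Fin 2) F :=
  Matrix.single i j 1

/-!
The operator is the rank-one map `R x = φ x • e₁₁` with `φ x = x₁₂ + x₂₁`. Because `e₁₁` is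
idempotent and `φ (e₁₁ y + y e₁₁) = φ y`, both sides of the Jordan Rota–Baxter identity reduce to
`φ x φ y • e₁₁`. For the associative product, `x = e₁₂`, `y = e₂₁` gives
`R x R y = e₁₁` while `R x y + x R y = e₁₁ e₂₁ + e₁₂ e₁₁ = 0`.
-/
section RankOne

variable {K A : Type*} [CommRing K] [Ring A] [Algebra K A]

theorem LinearMap.smulRight_mul_smulRight (φ : A →ₗ[K] K) (e x y : A) (he : e * e = e) :
    φ.smulRight e x * φ.smulRight e y = (φ x * φ y) • e := by
  simp only [smulRight_apply, smul_mul_smul, he]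

theorem LinearMap.smulRight_rotaBaxter_symmetrized (φ : A →ₗ[K] K) (e : A) (he : e * e = e)
    (hφ : ∀ y, φ (e * y + y * e) = φ y) (c : K) (x y : A) :
    c • (φ.smulRight e x * φ.smulRight e y + φ.smulRight e y * φ.smulRight e x) =
      φ.smulRight e (c • (φ.smulRight e x * y + y * φ.smulRight e x) +
        c • (x * φ.smulRight e y + φ.smulRight e y * x)) := by
  have hxy : φ.smulRight e x * y + y * φ.smulRight e x = φ x • (e * y + y * e) := by
    rw [smulRight_apply, smul_mul_assoc, mul_smul_comm, smul_add]
  have hyx : x * φ.smulRight e y + φ.smulRight e y * x = φ y • (e * x + x * e) := by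
    rw [smulRight_apply, smul_mul_assoc, mul_smul_comm, smul_add, add_comm]
  rw [hxy, hyx, smulRight_mul_smulRight φ e _ _ he, smulRight_mul_smulRight φ e _ _ he,
    smulRight_apply]
  simp only [map_add, map_smul, hφ, smul_eq_mul, smul_smul, ← add_smul]
  ring_nf

end RankOne

namespace Matrix

variable {F : Type*} [Field F]

def offDiagSum : Matrix (Fin 2) (Fin 2) F →ₗ[F] F :=
  entryLinearMap F F 0 1 + entryLinearMap F F 1 0

theorem offDiagSum_single_zero_zero_mul_add (y : Matrix (Fin 2) (Fin 2) F) :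
    offDiagSum (single 0 0 1 * y + y * single 0 0 1) = offDiagSum y := by
  simp [offDiagSum, single_mul_apply_same, mul_single_apply_same, single_mul_apply_of_ne,
    mul_single_apply_of_ne]

theorem eq_offDiagSum_smulRight {R : Matrix (Fin 2) (Fin 2) F →ₗ[F] Matrix (Fin 2) (Fin 2) F}
    (h00 : R (single 0 0 1) = 0) (h01 : R (single 0 1 1) = single 0 0 1)
    (h10 : R (single 1 0 1) = single 0 0 1) (h11 : R (single 1 1 1) = 0) :
    R = offDiagSum.smulRight (single 0 0 1) := by
  refine ext_linearMap F fun i j => LinearMap.ext_ring ?_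
  fin_cases i <;> fin_cases j <;> simp [offDiagSum, *]

end Matrix

open Matrix in
theorem second_example {F : Type*} [Field F]
    (R : Matrix (Fin 2) (Fin 2) F →ₗ[F] Matrix (Fin 2) (Fin 2) F)
    (h11 : R (E F 0 0) = 0) (h12 : R (E F 0 1) = E F 0 0)
    (h21 : R (E F 1 0) = E F 0 0) (h22 : R (E F 1 1) = 0) :
    (∀ x y : Matrix (Fin 2) (Fin 2) F,
      (2 : F)⁻¹ • (R x * R y + R y * R x) =
        R ((2 : F)⁻¹ • (R x * y + y * R x) + (2 : F)⁻¹ • (x * R y + R y * x))) ∧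
    ¬ (∀ x y : Matrix (Fin 2) (Fin 2) F, R x * R y = R (R x * y + x * R y)) := by
  unfold E at *
  obtain rfl := eq_offDiagSum_smulRight h11 h12 h21 h22
  have he : (single 0 0 1 * single 0 0 1 : Matrix (Fin 2) (Fin 2) F) = single 0 0 1 := by simp
  refine ⟨LinearMap.smulRight_rotaBaxter_symmetrized _ _ he offDiagSum_single_zero_zero_mul_add _,
    fun h => ?_⟩
  have hE := h (single 0 1 1) (single 1 0 1)
  simpa [offDiagSum] using congrFun₂ hE 0 0
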